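/- Soundness and completeness of KDC45: a modal formula is a theorem of the Hilbert system KDC45 if and only if it is true at every world of every classical Kripke model whose accessibility relation is serial, transitive, and Euclidean and which satisfies the C-propagation condition. -/

import Mathlib

/-!
Soundness is a routine induction on derivations, each axiom matching one frame condition.
For completeness, note that C gives `¬φ → □¬φ`, which together with D yields T: `□φ → φ`.
So `□φ ↔ φ` is derivable and every formula is provably equivalent to its box-erasure. A formula
valid on all such models is in particular valid on the one-world reflexive model, where it
evaluates like its erasure; hence the erasure is a tautology and the formula is derivable.
-/

/-- Modal formulas: atoms, negation, conjunction, disjunction, box. -/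
inductive Formula : Type where
  | atom : ℕ → Formula
  | neg : Formula → Formula
  | and : Formula → Formula → Formula
  | or : Formula → Formula → Formula
  | box : Formula → Formula

/-- φ → ψ abbreviates ¬φ ∨ ψ. -/
def Formula.imp (φ ψ : Formula) : Formula := .or (.neg φ) ψ

/-- Classical propositional evaluation treating boxed subformulas atomically. -/
def evalT (v : Formula → Bool) : Formula → Bool
  | .atom n => v (.atom n)
  | .neg φ => ! evalT v φ
  | .and φ ψ => evalT v φ && evalT v ψ
  | .or φ ψ => evalT v φ || evalT v ψ
  | .box φ => v (.box φ)

/-- A classical propositional tautology (boxed subformulas treated as atoms). -/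
def Tautology (φ : Formula) : Prop := ∀ v : Formula → Bool, evalT v φ = true


/-- The Hilbert system KDC45: classical tautologies, schemas K, C, D, 4, 5,
closed under modus ponens and necessitation. -/
inductive KDC45 : Formula → Prop where
  | taut {φ : Formula} : Tautology φ → KDC45 φ
  | axK (φ ψ : Formula) :
      KDC45 (Formula.imp (.box (Formula.imp φ ψ)) (Formula.imp (.box φ) (.box ψ)))
  | axC (φ : Formula) : KDC45 (Formula.imp φ (.box φ))
  | axD (φ : Formula) : KDC45 (Formula.imp (.box φ) (.neg (.box (.neg φ))))
  | ax4 (φ : Formula) : KDC45 (Formula.imp (.box φ) (.box (.box φ)))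
  | ax5 (φ : Formula) : KDC45 (Formula.imp (.neg (.box φ)) (.box (.neg (.box φ))))
  | mp {φ ψ : Formula} : KDC45 (Formula.imp φ ψ) → KDC45 φ → KDC45 ψ
  | nec {φ : Formula} : KDC45 φ → KDC45 (.box φ)

/-- Kripke satisfaction. -/
def Sat {W : Type} (R : W → W → Prop) (V : W → ℕ → Bool) : W → Formula → Prop
  | w, .atom n => V w n = true
  | w, .neg φ => ¬ Sat R V w φ
  | w, .and φ ψ => Sat R V w φ ∧ Sat R V w ψ
  | w, .or φ ψ => Sat R V w φ ∨ Sat R V w ψ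
  | w, .box φ => ∀ w', R w w' → Sat R V w' φ

def erase : Formula → Formula
  | .atom n => .atom n
  | .neg φ => .neg (erase φ)
  | .and φ ψ => .and (erase φ) (erase ψ)
  | .or φ ψ => .or (erase φ) (erase ψ)
  | .box φ => erase φ

section Semantics

variable {W : Type} {R : W → W → Prop} {V : W → ℕ → Bool}

@[simp]
lemma sat_imp (w : W) (φ ψ : Formula) :
    Sat R V w (φ.imp ψ) ↔ (Sat R V w φ → Sat R V w ψ) := by
  simp only [Formula.imp, Sat, imp_iff_not_or]

open Classical in
lemma evalT_sat_iff (w : W) (φ : Formula) :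
    evalT (fun ψ => decide (Sat R V w ψ)) φ = true ↔ Sat R V w φ := by
  induction φ with
  | atom n => exact decide_eq_true_iff
  | neg φ ih => simp [evalT, Sat, ← ih]
  | and φ ψ ihφ ihψ => simp [evalT, Sat, ihφ, ihψ]
  | or φ ψ ihφ ihψ => simp [evalT, Sat, ihφ, ihψ]
  | box φ => simp [evalT]

theorem KDC45.sound (hser : ∀ w : W, ∃ w' : W, R w w')
    (htrans : ∀ w w' w'' : W, R w w' → R w' w'' → R w w'')
    (heucl : ∀ w w' w'' : W, R w w' → R w w'' → R w' w'')
    (hprop : ∀ (ψ : Formula) (w w' : W), R w w' → Sat R V w ψ → Sat R V w' ψ)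
    {φ : Formula} (h : KDC45 φ) (w : W) : Sat R V w φ := by
  induction h generalizing w with
  | taut ht => classical exact (evalT_sat_iff w _).mp (ht _)
  | axK φ ψ =>
    simp only [sat_imp]
    exact fun hφψ hφ w' hw' => (sat_imp w' φ ψ).mp (hφψ w' hw') (hφ w' hw')
  | axC φ =>
    simp only [sat_imp, Sat]
    exact fun hφ w' hw' => hprop φ w w' hw' hφ
  | axD φ =>
    simp only [sat_imp, Sat]
    intro hφ hnφ
    obtain ⟨w', hw'⟩ := hser w
    exact hnφ w' hw' (hφ w' hw')
  | ax4 φ =>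
    simp only [sat_imp, Sat]
    exact fun hφ w' hw' w'' hw'' => hφ w'' (htrans w w' w'' hw' hw'')
  | ax5 φ =>
    simp only [sat_imp, Sat]
    exact fun hnφ w' hw' hφ => hnφ fun w'' hw'' => hφ w'' (heucl w w' w'' hw' hw'')
  | mp _ _ ihφψ ihφ => exact (sat_imp w _ _).mp (ihφψ w) (ihφ w)
  | nec _ ih => exact fun w' _ => ih w'

end Semantics

lemma sat_unit_iff_evalT_erase (v : Formula → Bool) (φ : Formula) (u : Unit) :
    Sat (fun _ _ => True) (fun _ n => v (.atom n)) u φ ↔ evalT v (erase φ) = true := by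
  induction φ with
  | atom n => simp [Sat, erase, evalT]
  | neg φ ih => simp [Sat, erase, evalT, ih]
  | and φ ψ ihφ ihψ => simp [Sat, erase, evalT, ihφ, ihψ]
  | or φ ψ ihφ ihψ => simp [Sat, erase, evalT, ihφ, ihψ]
  | box φ ih => simp [Sat, erase, ih]

namespace KDC45

lemma mp_taut {φ ψ : Formula} (t : Tautology (φ.imp ψ)) (h : KDC45 φ) : KDC45 ψ :=
  mp (taut t) h

lemma mp_taut₂ {φ ψ χ : Formula} (t : Tautology (φ.imp (ψ.imp χ))) (hφ : KDC45 φ)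
    (hψ : KDC45 ψ) : KDC45 χ :=
  mp (mp (taut t) hφ) hψ

lemma imp_self (φ : Formula) : KDC45 (φ.imp φ) :=
  taut fun v => by simp [Formula.imp, evalT]

lemma imp_trans {φ ψ χ : Formula} (h₁ : KDC45 (φ.imp ψ)) (h₂ : KDC45 (ψ.imp χ)) :
    KDC45 (φ.imp χ) :=
  mp_taut₂ (fun v => by simp only [Formula.imp, evalT]; grind) h₁ h₂

lemma neg_imp_neg {φ ψ : Formula} (h : KDC45 (φ.imp ψ)) :
    KDC45 ((Formula.neg ψ).imp (.neg φ)) :=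
  mp_taut (fun v => by simp only [Formula.imp, evalT]; grind) h

lemma and_imp_and {φ ψ φ' ψ' : Formula} (hφ : KDC45 (φ.imp φ')) (hψ : KDC45 (ψ.imp ψ')) :
    KDC45 ((Formula.and φ ψ).imp (.and φ' ψ')) :=
  mp_taut₂ (fun v => by simp only [Formula.imp, evalT]; grind) hφ hψ

lemma or_imp_or {φ ψ φ' ψ' : Formula} (hφ : KDC45 (φ.imp φ')) (hψ : KDC45 (ψ.imp ψ')) :
    KDC45 ((Formula.or φ ψ).imp (.or φ' ψ')) :=
  mp_taut₂ (fun v => by simp only [Formula.imp, evalT]; grind) hφ hψ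

lemma axT (φ : Formula) : KDC45 ((Formula.box φ).imp φ) :=
  mp_taut₂ (fun v => by simp only [Formula.imp, evalT]; grind) (axC (.neg φ)) (axD φ)

lemma imp_erase_and_erase_imp (φ : Formula) :
    KDC45 (φ.imp (erase φ)) ∧ KDC45 ((erase φ).imp φ) := by
  induction φ with
  | atom n => exact ⟨imp_self _, imp_self _⟩
  | neg φ ih => exact ⟨neg_imp_neg ih.2, neg_imp_neg ih.1⟩
  | and φ ψ ihφ ihψ => exact ⟨and_imp_and ihφ.1 ihψ.1, and_imp_and ihφ.2 ihψ.2⟩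
  | or φ ψ ihφ ihψ => exact ⟨or_imp_or ihφ.1 ihψ.1, or_imp_or ihφ.2 ihψ.2⟩
  | box φ ih => exact ⟨imp_trans (axT φ) ih.1, imp_trans ih.2 (axC φ)⟩

lemma of_tautology_erase {φ : Formula} (h : Tautology (erase φ)) : KDC45 φ :=
  mp (imp_erase_and_erase_imp φ).2 (taut h)

end KDC45

/-- Soundness and completeness of KDC45: a modal formula is a
theorem of KDC45 iff it is true at every world of every classical Kripke model
whose accessibility relation is serial, transitive, and Euclidean and which
satisfies the C-propagation condition. -/
theorem KDC45_soundness_completeness (φ : Formula) :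
    KDC45 φ ↔
      ∀ (W : Type) (R : W → W → Prop) (V : W → ℕ → Bool),
        (∀ w : W, ∃ w' : W, R w w') →
        (∀ w w' w'' : W, R w w' → R w' w'' → R w w'') →
        (∀ w w' w'' : W, R w w' → R w w'' → R w' w'') →
        (∀ (ψ : Formula) (w w' : W), R w w' → Sat R V w ψ → Sat R V w' ψ) →
        ∀ w : W, Sat R V w φ := by
  refine ⟨fun h W R V hser htrans heucl hprop => KDC45.sound hser htrans heucl hprop h,
    fun hvalid => KDC45.of_tautology_erase fun v => ?_⟩
  have hunit := hvalid Unit (fun _ _ => True) (fun _ n => v (.atom n)) (fun _ => ⟨(), trivial⟩)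
    (fun _ _ _ _ _ => trivial) (fun _ _ _ _ _ => trivial) (fun _ _ _ _ => id) ()
  exact (sat_unit_iff_evalT_erase v φ ()).mp hunit
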